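/- For the graph G_g consisting of a single vertex of weight g and no edges, the unique divisor of degree d ≥ 0 has combinatorial rank d − g if d ≥ 2g − 1, and ⌊d/2⌋ if 0 ≤ d ≤ 2g − 2. -/
import Mathlib


open Finset

/-- The order of the rational function `f` at the vertex `v`, for the graph with
edge multiplicities `m`:  `ord_v(f) = ∑_{w ≠ v} (f(v) - f(w))·(v·w)`. -/
def ordAt {V : Type*} [Fintype V] (m : V → V → ℕ) (f : V → ℤ) (v : V) : ℤ :=
  ∑ w, (f v - f w) * (m v w : ℤ)

/-- The divisor of the rational function `f`. -/
def divOf {V : Type*} [Fintype V] (m : V → V → ℕ) (f : V → ℤ) : V → ℤ :=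
  fun v => ordAt m f v

/-- The degree of a divisor. -/
def degOf {V : Type*} [Fintype V] (d : V → ℤ) : ℤ := ∑ v, d v

/-- A divisor is principal if it is the divisor of some rational function. -/
def IsPrincipal {V : Type*} [Fintype V] (m : V → V → ℕ) (d : V → ℤ) : Prop :=
  ∃ f : V → ℤ, d = divOf m f

/-- Linear equivalence of divisors. -/
def LinEquiv {V : Type*} [Fintype V] (m : V → V → ℕ) (d d' : V → ℤ) : Prop :=
  IsPrincipal m (d - d')

/-- `rankGE m d k` : every effective divisor of degree `k` is dominated by some
divisor linearly equivalent to `d`. -/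
def rankGE {V : Type*} [Fintype V] (m : V → V → ℕ) (d : V → ℤ) (k : ℕ) : Prop :=
  ∀ e : V → ℤ, (∀ v, 0 ≤ e v) → degOf e = (k : ℤ) →
    ∃ d' : V → ℤ, LinEquiv m d d' ∧ ∀ v, e v ≤ d' v

/-- The Baker–Norine combinatorial rank of a divisor: the largest `k ≥ 0` such that
every effective divisor of degree `k` is dominated by a divisor equivalent to `d`,
and `-1` if there is no such `k`. -/
noncomputable def bnRank {V : Type*} [Fintype V] (m : V → V → ℕ) (d : V → ℤ) : ℤ :=
  sSup ({-1} ∪ {k : ℤ | 0 ≤ k ∧ rankGE m d k.toNat})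

/-- Connectivity of the (multi)graph with edge multiplicities `m`. -/
def Conn {V : Type*} [Fintype V] (m : V → V → ℕ) : Prop :=
  ∀ u v : V, Relation.ReflTransGen (fun a b => 0 < m a b) u v

/-- The weightless loopless model `G_g•` of the graph `G_g` with one vertex of
weight `g` and no edges: a central vertex `none` joined to each of `g` outer
vertices by a double edge. -/
def oneVertexModel (g : ℕ) : Option (Fin g) → Option (Fin g) → ℕ :=
  fun x y => match x, y with
    | none, some _ => 2
    | some _, none => 2
    | _, _ => 0


section AuxOneVertex
variable {g : ℕ}

private lemma divOf_some' (f : Option (Fin g) → ℤ) (i : Fin g) :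
    divOf (oneVertexModel g) f (some i) = 2 * (f (some i) - f none) := by
  simp [divOf, ordAt, Fintype.sum_option, oneVertexModel]
  ring

private lemma divOf_none' (f : Option (Fin g) → ℤ) :
    divOf (oneVertexModel g) f none = ∑ i, 2 * (f none - f (some i)) := by
  simp [divOf, ordAt, Fintype.sum_option, oneVertexModel]
  apply Finset.sum_congr rfl
  intro i _
  ring

private lemma degOf_divOf' (f : Option (Fin g) → ℤ) :
    degOf (divOf (oneVertexModel g) f) = 0 := by
  rw [degOf, Fintype.sum_option, divOf_none']
  simp_rw [divOf_some']
  rw [← Finset.sum_add_distrib]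
  apply Finset.sum_eq_zero
  intro i _
  ring

private lemma degOf_option' (p : Option (Fin g) → ℤ) :
    degOf p = p none + ∑ i, p (some i) := Fintype.sum_option p

private lemma isPrincipal_iff' (p : Option (Fin g) → ℤ) :
    IsPrincipal (oneVertexModel g) p ↔ (∀ i, 2 ∣ p (some i)) ∧ degOf p = 0 := by
  constructor
  · rintro ⟨f, rfl⟩
    refine ⟨fun i => ?_, degOf_divOf' f⟩
    rw [divOf_some']
    exact Dvd.intro _ rfl
  · rintro ⟨hev, hdeg⟩
    refine ⟨fun x => match x with | none => 0 | some i => p (some i) / 2, ?_⟩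
    funext x
    cases x with
    | none =>
        rw [divOf_none']
        have hp : p none = -∑ i, p (some i) := by
          rw [degOf_option'] at hdeg; linarith
        rw [hp, ← Finset.sum_neg_distrib]
        apply Finset.sum_congr rfl
        intro i _
        have := Int.ediv_mul_cancel (hev i)
        simp only [zero_sub]
        omega
    | some i =>
        rw [divOf_some']
        simp only [sub_zero]
        exact (Int.mul_ediv_cancel' (hev i)).symm

private lemma linEquiv_iff' (d : ℤ) (d' : Option (Fin g) → ℤ) :
    LinEquiv (oneVertexModel g) (fun x : Option (Fin g) => if x = none then d else 0) d' ↔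
      (∀ i, 2 ∣ d' (some i)) ∧ degOf d' = d := by
  rw [LinEquiv, isPrincipal_iff']
  have hdeg : degOf ((fun x : Option (Fin g) => if x = none then d else 0) - d')
      = d - degOf d' := by
    simp only [degOf, Pi.sub_apply, Finset.sum_sub_distrib]
    congr 1
    rw [Fintype.sum_option]
    simp
  rw [hdeg]
  constructor
  · rintro ⟨hev, h⟩
    refine ⟨fun i => ?_, by linarith⟩
    have := hev i
    simp at this
    omega
  · rintro ⟨hev, h⟩
    refine ⟨fun i => ?_, by linarith⟩
    have := hev i
    simp
    omega

private lemma sum_ite_lt' (g t : ℕ) (ht : t ≤ g) (c : ℤ) :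
    ∑ i : Fin g, (if (i : ℕ) < t then c else 0) = c * t := by
  rw [Fin.sum_univ_eq_sum_range (fun i => if i < t then c else 0)]
  have : ∀ i, (if i < t then c else 0) = if i ∈ Finset.range t then c else 0 := by
    intro i; simp [Finset.mem_range]
  simp_rw [this]
  rw [Finset.sum_ite_mem, Finset.inter_eq_right.mpr (Finset.range_subset_range.mpr ht),
    Finset.sum_const, Finset.card_range]
  push_cast; ring

private lemma rankGE_iff' (d : ℤ) (k : ℕ) :
    rankGE (oneVertexModel g) (fun x : Option (Fin g) => if x = none then d else 0) k ↔
      (k : ℤ) + min g k ≤ d := by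
  constructor
  · intro h
    set t := min g k with hts
    have htg : t ≤ g := min_le_left _ _
    have htk : t ≤ k := min_le_right _ _
    obtain ⟨d', hlin, hdom⟩ := h
      (fun x => match x with
        | none => (k : ℤ) - t
        | some i => if (i : ℕ) < t then 1 else 0)
      (by
        intro v
        cases v with
        | none => simp; exact_mod_cast htk
        | some i => dsimp only; split <;> norm_num)
      (by
        rw [degOf_option']
        dsimp only
        rw [sum_ite_lt' g t htg 1]
        push_cast; ring)
    obtain ⟨hev, hdeg⟩ := (linEquiv_iff' d d').mp hlin
    have hsum : (2 : ℤ) * t ≤ ∑ i, d' (some i) := by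
      calc (2:ℤ) * t = ∑ i : Fin g, (if (i : ℕ) < t then (2:ℤ) else 0) := by
            rw [sum_ite_lt' g t htg 2]
        _ ≤ ∑ i, d' (some i) := by
            apply Finset.sum_le_sum
            intro i _
            have h1 := hdom (some i)
            have h2 := hev i
            dsimp only at h1
            split <;> rename_i hi <;> simp [hi] at h1 <;> omega
    have h0 := hdom none
    dsimp only at h0
    rw [degOf_option'] at hdeg
    omega
  · intro hle e he hdeg
    refine ⟨fun x => match x with
      | none => d - ∑ i, (e (some i) + e (some i) % 2)
      | some i => e (some i) + e (some i) % 2, ?_, ?_⟩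
    · rw [linEquiv_iff']
      constructor
      · intro i; dsimp only; omega
      · rw [degOf_option']; dsimp only; ring
    · have hsum_le : ∑ i, e (some i) % 2 ≤ (min g k : ℤ) := by
        rcases min_cases (g:ℤ) (k:ℤ) with ⟨hm, _⟩ | ⟨hm, _⟩
        · calc ∑ i, e (some i) % 2 ≤ ∑ _i : Fin g, (1:ℤ) := by
                apply Finset.sum_le_sum; intro i _; omega
            _ = g := by simp
            _ = _ := by push_cast [hm]; ring
        · calc ∑ i, e (some i) % 2 ≤ ∑ i, e (some i) := by
                apply Finset.sum_le_sum; intro i _; have := he (some i); omega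
            _ ≤ (k : ℤ) := by
                rw [degOf_option'] at hdeg; have := he none; omega
            _ = _ := by push_cast [hm]; ring
      intro v
      cases v with
      | some i => dsimp only; omega
      | none =>
          dsimp only
          rw [degOf_option'] at hdeg
          have h0 := he none
          rw [Finset.sum_add_distrib] at *
          push_cast at hsum_le hle ⊢
          omega

end AuxOneVertex

/-- For the graph `G_g` (one vertex of weight `g`, no edges), the unique divisor
of degree `d ≥ 0` has combinatorial rank `d − g` if `d ≥ 2g − 1`, and `⌊d/2⌋` if
`0 ≤ d ≤ 2g − 2`; the rank is computed on the model `G_g•`. -/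
theorem weight_g_vertex_rank (g : ℕ) (d : ℤ) (hd : 0 ≤ d) :
    (2 * (g : ℤ) - 1 ≤ d →
      bnRank (oneVertexModel g)
        (fun x : Option (Fin g) => if x = none then d else 0) = d - g) ∧
    (d ≤ 2 * (g : ℤ) - 2 →
      bnRank (oneVertexModel g)
        (fun x : Option (Fin g) => if x = none then d else 0) = d / 2) := by
  have key : ∀ k : ℕ,
      rankGE (oneVertexModel g)
        (fun x : Option (Fin g) => if x = none then d else 0) k ↔
      (k : ℤ) + min g k ≤ d := rankGE_iff' d
  set S : Set ℤ := {-1} ∪ {k : ℤ | 0 ≤ k ∧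
      rankGE (oneVertexModel g)
        (fun x : Option (Fin g) => if x = none then d else 0) k.toNat} with hS
  have hSrank : bnRank (oneVertexModel g)
      (fun x : Option (Fin g) => if x = none then d else 0) = sSup S := rfl
  have hne : (-1 : ℤ) ∈ S := Or.inl rfl
  have hbdd : BddAbove S := by
    refine ⟨d, ?_⟩
    rintro x (hx | ⟨hx0, hx⟩)
    · simp only [Set.mem_singleton_iff] at hx; omega
    · have := (key x.toNat).mp hx
      push_cast at this
      omega
  constructor
  · intro h1
    rw [hSrank]
    apply le_antisymm
    · apply csSup_le ⟨-1, hne⟩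
      rintro x (hx | ⟨hx0, hx⟩)
      · simp only [Set.mem_singleton_iff] at hx; omega
      · have := (key x.toNat).mp hx
        push_cast at this
        omega
    · apply le_csSup hbdd
      refine Or.inr ⟨by omega, (key _).mpr ?_⟩
      push_cast
      omega
  · intro h2
    rw [hSrank]
    apply le_antisymm
    · apply csSup_le ⟨-1, hne⟩
      rintro x (hx | ⟨hx0, hx⟩)
      · simp only [Set.mem_singleton_iff] at hx; omega
      · have := (key x.toNat).mp hx
        push_cast at this
        omega
    · apply le_csSup hbdd
      refine Or.inr ⟨by omega, (key _).mpr ?_⟩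
      push_cast
      omega
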